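/- Let D be a triangulated category, E ⊆ D an admissible subcategory, and (G, F) an adjoint pair of exact endofunctors such that F acts on E as an equivalence and nilpotently on E^⊥. For a natural number a, the following are equivalent: (1) F^a(D) ⊆ E; (2) F^a(E^⊥) = 0; (3) the map Hom(F^a(d), d') → Hom(F^{a+1}(d), F(d')) induced by F is an isomorphism for all d, d' ∈ D. -/

import Mathlib

/-!
Let `D` be a triangulated category, `E ⊆ D` an admissible subcategory, and `(G, F)` an
adjoint pair of exact endofunctors such that `F` acts on `E` as an equivalence and
nilpotently on `E^⊥`.  For a natural number `a`, the following are equivalent: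
(1) `F^a(D) ⊆ E`; (2) `F^a(E^⊥) = 0`; (3) the map
`Hom(F^a d, d') → Hom(F^(a+1) d, F d')` induced by `F` is bijective for all `d, d'`.
-/

open CategoryTheory Limits CategoryTheory.Pretriangulated

namespace Stmt6

universe v u

variable {D : Type u} [Category.{v} D] [Preadditive D] [HasZeroObject D]
  [HasShift D ℤ] [∀ n : ℤ, (CategoryTheory.shiftFunctor D n).Additive] [Pretriangulated D]

/-- Iterated composition of an endofunctor. -/
def iter (F : D ⥤ D) : ℕ → D ⥤ D
  | 0 => 𝟭 D
  | n + 1 => iter F n ⋙ F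

/-- The right orthogonal of a class of objects. -/
def rOrth (P : D → Prop) : D → Prop := fun d => ∀ e : D, P e → ∀ f : e ⟶ d, f = 0

/-!
Right admissibility of `E` gives, for every `d`, a triangle `e → d → c → e⟦1⟧` with `e ∈ E`
and `c ∈ E^⊥`. Applying `F^a` to it shows (1) ⇔ (2): `F^a c = 0` says exactly that
`F^a e ≅ F^a d`. For `x ∈ E`, maps `x ⟶ d` are the maps `x ⟶ e`, and the same holds after
applying `F` because `F` preserves `E^⊥`; since `F` is fully faithful on `E`, this gives
(1) ⇒ (3). Conversely, (3) makes `F` faithful on the endomorphisms of every `F^(a+k) d`, so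
`F^(a+b) d = 0` for `d ∈ E^⊥` forces `F^a d = 0`.
-/

section Iterate

variable {C : Type*} [Category C]

lemma iter_obj_map_obj (F : C ⥤ C) (n : ℕ) (d : C) :
    (iter F n).obj (F.obj d) = F.obj ((iter F n).obj d) := by
  induction n with
  | zero => rfl
  | succ n ih => exact congrArg F.obj ih

lemma iter_obj_iter_obj_comm (F : C ⥤ C) (m n : ℕ) (d : C) :
    (iter F m).obj ((iter F n).obj d) = (iter F n).obj ((iter F m).obj d) := by
  induction m with
  | zero => rfl
  | succ m ih => exact (congrArg F.obj ih).trans (iter_obj_map_obj F n _).symm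

lemma iter_obj_mem {Q : C → Prop} {F : C ⥤ C} (hF : ∀ d, Q d → Q (F.obj d)) (n : ℕ)
    {d : C} (hd : Q d) : Q ((iter F n).obj d) := by
  induction n with
  | zero => exact hd
  | succ n ih => exact hF _ ih

variable [HasZeroMorphisms C]

lemma isZero_of_isZero_map_obj (F : C ⥤ C) [F.PreservesZeroMorphisms] {x : C}
    (hinj : Function.Injective (F.map : (x ⟶ x) → (F.obj x ⟶ F.obj x)))
    (hx : IsZero (F.obj x)) : IsZero x :=
  (IsZero.iff_id_eq_zero x).2 (hinj (by rw [F.map_id, F.map_zero]; exact hx.eq_of_src _ _))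

lemma isZero_of_isZero_iter_obj (F : C ⥤ C) [F.PreservesZeroMorphisms] {x : C}
    (hinj : ∀ k, Function.Injective
      (F.map : ((iter F k).obj x ⟶ (iter F k).obj x) → (F.obj _ ⟶ F.obj _)))
    (b : ℕ) (hb : IsZero ((iter F b).obj x)) : IsZero x := by
  induction b with
  | zero => exact hb
  | succ b ih => exact ih (isZero_of_isZero_map_obj F (hinj b) hb)

end Iterate

noncomputable instance iterCommShift (F : D ⥤ D) [F.CommShift ℤ] :
    ∀ n : ℕ, (iter F n).CommShift ℤ
  | 0 => inferInstanceAs ((𝟭 D).CommShift ℤ)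
  | n + 1 =>
      letI := iterCommShift F n
      inferInstanceAs ((iter F n ⋙ F).CommShift ℤ)

instance iterIsTriangulated (F : D ⥤ D) [F.CommShift ℤ] [F.IsTriangulated] :
    ∀ n : ℕ, (iter F n).IsTriangulated
  | 0 => inferInstanceAs ((𝟭 D).IsTriangulated)
  | n + 1 =>
      letI := iterIsTriangulated F n
      inferInstanceAs ((iter F n ⋙ F).IsTriangulated)

lemma isZero_of_mem_of_rOrth {C : Type*} [Category C] [Preadditive C] {P : C → Prop} {x : C}
    (hx : P x) (hx' : rOrth P x) : IsZero x :=
  (IsZero.iff_id_eq_zero x).2 (hx' x hx (𝟙 x))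

lemma map_bijective_of_isEquivalence_lift {C : Type*} [Category C] {P : C → Prop}
    {F : C ⥤ C} (hFP : ∀ d : C, P d → P (F.obj d))
    [(ObjectProperty.lift P (ObjectProperty.ι P ⋙ F) (fun X => hFP X.1 X.2)).IsEquivalence]
    {x y : C} (hx : P x) (hy : P y) :
    Function.Bijective (F.map : (x ⟶ y) → (F.obj x ⟶ F.obj y)) := by
  have hff : (ObjectProperty.ι P ⋙ F).FullyFaithful :=
    (Functor.FullyFaithful.ofFullyFaithful
      (ObjectProperty.lift P (ObjectProperty.ι P ⋙ F) (fun X => hFP X.1 X.2))).comp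
      (ObjectProperty.fullyFaithfulι P)
  exact (Function.Bijective.of_comp_iff _
    ((ObjectProperty.fullyFaithfulι P).map_bijective ⟨x, hx⟩ ⟨y, hy⟩)).1
    (hff.map_bijective _ _)

lemma comp_mor₁_bijective {T : Triangle D} (hT : T ∈ distTriang D) {X : D}
    (h₀ : ∀ g : X ⟶ T.obj₃, g = 0) (h₁ : ∀ g : X⟦(1 : ℤ)⟧ ⟶ T.obj₃, g = 0) :
    Function.Bijective (fun v : X ⟶ T.obj₁ => v ≫ T.mor₁) := by
  refine ⟨(injective_iff_map_eq_zero (Preadditive.rightComp X T.mor₁)).2 fun v hv => ?_,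
    fun u => ?_⟩
  · have hv' : v⟦(1 : ℤ)⟧' ≫ T.mor₁⟦(1 : ℤ)⟧' = 0 := by
      rw [← Functor.map_comp]
      exact (congrArg _ hv).trans (Functor.map_zero _ _ _)
    obtain ⟨g, hg⟩ := Triangle.coyoneda_exact₁ T hT _ hv'
    apply (shiftFunctor D (1 : ℤ)).map_injective
    rw [hg, h₁ g, zero_comp, Functor.map_zero]
  · obtain ⟨v, hv⟩ := Triangle.coyoneda_exact₂ T hT u (h₀ _)
    exact ⟨v, hv.symm⟩

lemma eq_zero_of_comp_mor₁_surjective {T : Triangle D} (hT : T ∈ distTriang D) {X : D}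
    (hsurj : Function.Surjective (fun v : X ⟶ T.obj₁ => v ≫ T.mor₁))
    (hinj : ∀ g : X⟦(-1 : ℤ)⟧ ⟶ T.obj₁, g ≫ T.mor₁ = 0 → g = 0) (u : X ⟶ T.obj₃) :
    u = 0 := by
  let adj : shiftFunctor D (-1 : ℤ) ⊣ shiftFunctor D (1 : ℤ) :=
    (shiftEquiv' D (-1 : ℤ) 1 (by norm_num)).toAdjunction
  have hzero : ∀ {Y : D}, adj.homEquiv X Y 0 = 0 := by simp [Adjunction.homEquiv_unit]
  obtain ⟨g, hg⟩ : ∃ g : X⟦(-1 : ℤ)⟧ ⟶ T.obj₁, adj.homEquiv _ _ g = u ≫ T.mor₃ :=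
    (adj.homEquiv _ _).surjective _
  have hg0 : g = 0 := hinj g ((adj.homEquiv _ _).injective (by
    rw [adj.homEquiv_naturality_right, hg, Category.assoc, comp_distTriang_mor_zero₃₁ T hT,
      comp_zero, hzero]))
  have hu : u ≫ T.mor₃ = 0 := by rw [← hg, hg0, hzero]
  obtain ⟨v, rfl⟩ := Triangle.coyoneda_exact₃ T hT u hu
  obtain ⟨w, rfl⟩ := hsurj v
  simp [comp_distTriang_mor_zero₁₂ T hT]

lemma comp_counit_app_bijective {C C' : Type*} [Category C] [Category C']
    {L : C ⥤ C'} {R : C' ⥤ C} (adj : L ⊣ R) (hL : L.FullyFaithful) (y : C) (z : C') :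
    Function.Bijective (fun v : L.obj y ⟶ L.obj (R.obj z) => v ≫ adj.counit.app z) := by
  refine (Function.Bijective.of_comp_iff _ (hL.map_bijective y (R.obj z))).1 ?_
  have h : (fun v => v ≫ adj.counit.app z) ∘ L.map = (adj.homEquiv y z).symm :=
    funext fun v => (adj.homEquiv_counit y z v).symm
  exact h ▸ (adj.homEquiv y z).symm.bijective

lemma exists_distTriang_mem_rOrth (P : D → Prop) (hP_shift : ∀ X : D, P X → P (X⟦(-1 : ℤ)⟧))
    [(ObjectProperty.ι P).IsLeftAdjoint] (z : D) :
    ∃ (e c : D) (f : e ⟶ z) (g : z ⟶ c) (h : c ⟶ e⟦(1 : ℤ)⟧),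
      Triangle.mk f g h ∈ distTriang D ∧ P e ∧ rOrth P c := by
  let adj := Adjunction.ofIsLeftAdjoint (ObjectProperty.ι P)
  have hbij := comp_counit_app_bijective adj (ObjectProperty.fullyFaithfulι P)
  obtain ⟨c, g, h, hT⟩ := distinguished_cocone_triangle (adj.counit.app z)
  refine ⟨_, c, _, g, h, hT, ((ObjectProperty.ι P).rightAdjoint.obj z).2,
    fun e he u => eq_zero_of_comp_mor₁_surjective hT (hbij ⟨e, he⟩ z).2
      (fun g hg => (hbij ⟨_, hP_shift e he⟩ z).1 (hg.trans (zero_comp).symm)) u⟩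

lemma mem_obj_of_isZero_obj_rOrth (P : D → Prop) (hP_iso : ∀ {X Y : D}, (X ≅ Y) → P X → P Y)
    (hP_shift : ∀ X : D, P X → P (X⟦(-1 : ℤ)⟧)) [(ObjectProperty.ι P).IsLeftAdjoint]
    (H : D ⥤ D) [H.CommShift ℤ] [H.IsTriangulated] (hHP : ∀ d : D, P d → P (H.obj d))
    (hH : ∀ d : D, rOrth P d → IsZero (H.obj d)) (d : D) : P (H.obj d) := by
  obtain ⟨e, c, f, g, h, hT, he, hc⟩ := exists_distTriang_mem_rOrth P hP_shift d
  have : IsIso (H.map f) :=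
    (Triangle.isZero₃_iff_isIso₁ _ (H.map_distinguished _ hT)).1 (hH c hc)
  exact hP_iso (asIso (H.map f)) (hHP e he)

lemma map_bijective_of_mem (P : D → Prop) (hP_shift : ∀ (X : D) (n : ℤ), P X → P (X⟦n⟧))
    [(ObjectProperty.ι P).IsLeftAdjoint] (F : D ⥤ D) [F.CommShift ℤ] [F.IsTriangulated]
    (hFP : ∀ d : D, P d → P (F.obj d))
    (hFff : ∀ {x y : D}, P x → P y → Function.Bijective (F.map : (x ⟶ y) → (F.obj x ⟶ F.obj y)))
    (hFperp : ∀ d : D, rOrth P d → rOrth P (F.obj d)) {x : D} (hx : P x) (y : D) :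
    Function.Bijective (F.map : (x ⟶ y) → (F.obj x ⟶ F.obj y)) := by
  obtain ⟨e, c, f, g, h, hT, he, hc⟩ :=
    exists_distTriang_mem_rOrth P (fun X => hP_shift X (-1)) y
  have hFx := hFP x hx
  have hf := comp_mor₁_bijective hT (hc x hx) (hc _ (hP_shift x 1 hx))
  have hFf := comp_mor₁_bijective (F.map_distinguished _ hT) (hFperp c hc _ hFx)
    (hFperp c hc _ (hP_shift _ 1 hFx))
  have hsq : F.map ∘ (fun v : x ⟶ e => v ≫ f) = (fun w => w ≫ F.map f) ∘ F.map :=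
    funext fun v => F.map_comp v f
  exact (Function.Bijective.of_comp_iff _ hf).1 (hsq ▸ hFf.comp (hFff hx he))

theorem power_conditions_equivalent_general
    (P : D → Prop)
    -- `E` is a thick subcategory:
    (hP_iso : ∀ {X Y : D}, (X ≅ Y) → P X → P Y)
    (hP_shift : ∀ (X : D) (n : ℤ), P X → P (X⟦n⟧))
    -- `E` is admissible:
    (_hadm_right : (ObjectProperty.ι P).IsLeftAdjoint)
    -- `(G, F)` an adjoint pair of exact endofunctors:
    (F : D ⥤ D) [F.CommShift ℤ] [F.IsTriangulated]
    -- `F` restricts to an autoequivalence of `E`: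
    (hFP : ∀ d : D, P d → P (F.obj d))
    (hFE : (ObjectProperty.lift P (ObjectProperty.ι P ⋙ F)
      (fun X => hFP X.1 X.2)).IsEquivalence)
    -- `F` acts nilpotently on `E^⊥`:
    (hFperp : ∀ d : D, rOrth P d → rOrth P (F.obj d))
    (hnilp : ∃ b : ℕ, ∀ d : D, rOrth P d → IsZero ((iter F b).obj d))
    (a : ℕ) :
    ((∀ d : D, P ((iter F a).obj d)) ↔
        (∀ d : D, rOrth P d → IsZero ((iter F a).obj d))) ∧
      ((∀ d : D, P ((iter F a).obj d)) ↔
        (∀ d d' : D, Function.Bijective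
          (fun f : (iter F a).obj d ⟶ d' => F.map f))) := by
  obtain ⟨b, hb⟩ := hnilp
  have h12 : (∀ d, P ((iter F a).obj d)) → ∀ d, rOrth P d → IsZero ((iter F a).obj d) :=
    fun h1 d hd => isZero_of_mem_of_rOrth (h1 d) (iter_obj_mem hFperp a hd)
  have h21 : (∀ d, rOrth P d → IsZero ((iter F a).obj d)) → ∀ d, P ((iter F a).obj d) :=
    mem_obj_of_isZero_obj_rOrth P hP_iso (fun X => hP_shift X (-1)) (iter F a)
      (fun _ => iter_obj_mem hFP a)
  have h13 : (∀ d, P ((iter F a).obj d)) →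
      ∀ d d', Function.Bijective (fun f : (iter F a).obj d ⟶ d' => F.map f) :=
    fun h1 d => map_bijective_of_mem P hP_shift F hFP
      (map_bijective_of_isEquivalence_lift hFP) hFperp (h1 d)
  have h32 : (∀ d d', Function.Bijective (fun f : (iter F a).obj d ⟶ d' => F.map f)) →
      ∀ d, rOrth P d → IsZero ((iter F a).obj d) := by
    intro h3 d hd
    refine isZero_of_isZero_iter_obj F (fun k => ?_) b ?_
    · rw [iter_obj_iter_obj_comm]
      exact (h3 _ _).1
    · rw [iter_obj_iter_obj_comm]
      exact (iter F a).map_isZero (hb d hd)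
  exact ⟨⟨h12, h21⟩, h13, h21 ∘ h32⟩

theorem power_conditions_equivalent
    (P : D → Prop)
    -- `E` is a thick subcategory:
    (hP_iso : ∀ {X Y : D}, (X ≅ Y) → P X → P Y)
    (hP_shift : ∀ (X : D) (n : ℤ), P X → P (X⟦n⟧))
    (hP_tri : ∀ T ∈ distTriang D, P T.obj₁ → P T.obj₂ → P T.obj₃)
    (hP_retract : ∀ (X Z : D), P Z → ∀ (i : X ⟶ Z) (r : Z ⟶ X), i ≫ r = 𝟙 X → P X)
    -- `E` is admissible:
    (_hadm_right : (ObjectProperty.ι P).IsLeftAdjoint)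
    (_hadm_left : (ObjectProperty.ι P).IsRightAdjoint)
    -- `(G, F)` an adjoint pair of exact endofunctors:
    (F G : D ⥤ D) [F.CommShift ℤ] [F.IsTriangulated] [G.CommShift ℤ] [G.IsTriangulated]
    (adj : G ⊣ F)
    -- `F` restricts to an autoequivalence of `E`:
    (hFP : ∀ d : D, P d → P (F.obj d))
    (hFE : (ObjectProperty.lift P (ObjectProperty.ι P ⋙ F)
      (fun X => hFP X.1 X.2)).IsEquivalence)
    -- `F` acts nilpotently on `E^⊥`:
    (hFperp : ∀ d : D, rOrth P d → rOrth P (F.obj d))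
    (hnilp : ∃ b : ℕ, ∀ d : D, rOrth P d → IsZero ((iter F b).obj d))
    (a : ℕ) :
    ((∀ d : D, P ((iter F a).obj d)) ↔
        (∀ d : D, rOrth P d → IsZero ((iter F a).obj d))) ∧
      ((∀ d : D, P ((iter F a).obj d)) ↔
        (∀ d d' : D, Function.Bijective
          (fun f : (iter F a).obj d ⟶ d' => F.map f))) :=
  power_conditions_equivalent_general P hP_iso hP_shift _hadm_right F hFP hFE hFperp hnilp a

end Stmt6
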